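/- Let x ∈ [-X, X] and y ∈ [-Y, Y] with X ≥ 0 and Y ≥ 1, and let σ be the sigmoid function. Then |x - y| ≤ 8(X + Y)·e^{2Y}·|σ(x) - σ(y)|. -/

import Mathlib

noncomputable def sigmoid (x : ℝ) : ℝ := 1 / (1 + Real.exp (-x))

/-
On `[-M, M]` the derivative `σ' = σ (1 - σ) = 1 / (2 + eᵗ + e⁻ᵗ)` is at least `e^{-M} / 4`, so by the
mean value theorem `|x - y| ≤ 4 e^{2Y} |σ x - σ y|` whenever `|x| ≤ 2Y`. If instead `|x| > 2Y ≥ 2|y|`,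
the interval between `x` and `y` contains `[Y, 2Y]` or `[-2Y, -Y]`, across which `σ` already moves by at
least `Y e^{-2Y} / 4`, while `|x - y| ≤ X + Y`.
-/

theorem sigmoid_eq_real_sigmoid : sigmoid = Real.sigmoid := by
  funext x
  rw [sigmoid, Real.sigmoid_def, one_div]

theorem exp_neg_abs_div_four_le_deriv_sigmoid (t : ℝ) :
    Real.exp (-|t|) / 4 ≤ deriv Real.sigmoid t := by
  have h_prod : Real.exp t * Real.exp (-t) = 1 := by
    rw [← Real.exp_add, add_neg_cancel, Real.exp_zero]
  have h_pos : Real.exp t ≤ Real.exp |t| := Real.exp_le_exp.mpr (le_abs_self t)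
  have h_neg : Real.exp (-t) ≤ Real.exp |t| := Real.exp_le_exp.mpr (neg_le_abs t)
  have h_one : 1 ≤ Real.exp |t| := Real.one_le_exp (abs_nonneg t)
  have h_deriv : deriv Real.sigmoid t = ((1 + Real.exp (-t)) * (1 + Real.exp t))⁻¹ := by
    rw [(Real.hasDerivAt_sigmoid t).deriv, ← Real.sigmoid_neg, Real.sigmoid_def,
      Real.sigmoid_def, neg_neg, mul_inv]
  rw [h_deriv, Real.exp_neg, div_eq_inv_mul, ← mul_inv]
  apply inv_anti₀ (by positivity)
  nlinarith

theorem sub_le_four_mul_exp_mul_sigmoid_sub {M a b : ℝ} (ha : -M ≤ a) (hb : b ≤ M)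
    (hab : a ≤ b) :
    b - a ≤ 4 * Real.exp M * (Real.sigmoid b - Real.sigmoid a) := by
  have h_mvt : Real.exp (-M) / 4 * (b - a) ≤ Real.sigmoid b - Real.sigmoid a := by
    refine (convex_Icc (-M) M).mul_sub_le_image_sub_of_le_deriv
      continuous_sigmoid.continuousOn differentiable_sigmoid.differentiableOn
      (fun t ht ↦ ?_) a ⟨ha, hab.trans hb⟩ b ⟨ha.trans hab, hb⟩ hab
    rw [interior_Icc] at ht
    calc Real.exp (-M) / 4 ≤ Real.exp (-|t|) / 4 := by
          gcongr
          exact abs_le.mpr ⟨ht.1.le, ht.2.le⟩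
      _ ≤ deriv Real.sigmoid t := exp_neg_abs_div_four_le_deriv_sigmoid t
  rw [Real.exp_neg, div_eq_inv_mul, ← mul_inv, inv_mul_eq_div,
    div_le_iff₀ (by positivity)] at h_mvt
  rwa [mul_comm] at h_mvt

theorem abs_sub_le_four_mul_exp_mul_abs_sigmoid_sub {M a b : ℝ} (ha : |a| ≤ M) (hb : |b| ≤ M) :
    |a - b| ≤ 4 * Real.exp M * |Real.sigmoid a - Real.sigmoid b| := by
  wlog hab : a ≤ b generalizing a b
  · rw [abs_sub_comm, abs_sub_comm (Real.sigmoid a)]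
    exact this hb ha (le_of_not_ge hab)
  rw [abs_sub_comm, abs_of_nonneg (sub_nonneg.mpr hab), abs_sub_comm,
    abs_of_nonneg (sub_nonneg.mpr (Real.sigmoid_le hab))]
  exact sub_le_four_mul_exp_mul_sigmoid_sub (abs_le.mp ha).1 (abs_le.mp hb).2 hab

theorem le_four_mul_exp_two_mul_mul_abs_sigmoid_sub {M x y : ℝ} (hy : |y| ≤ M) (hx : 2 * M ≤ |x|) :
    M ≤ 4 * Real.exp (2 * M) * |Real.sigmoid x - Real.sigmoid y| := by
  wlog hx_nonneg : 0 ≤ x generalizing x y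
  · have h := this (x := -x) (y := -y) (by rwa [abs_neg]) (by rwa [abs_neg]) (by linarith)
    rwa [Real.sigmoid_neg, Real.sigmoid_neg, sub_sub_sub_cancel_left, abs_sub_comm] at h
  obtain ⟨-, hy_le⟩ := abs_le.mp hy
  rw [abs_of_nonneg hx_nonneg] at hx
  have hM : 0 ≤ M := (abs_nonneg y).trans hy
  calc M = 2 * M - M := by ring
    _ ≤ 4 * Real.exp (2 * M) * (Real.sigmoid (2 * M) - Real.sigmoid M) :=
      sub_le_four_mul_exp_mul_sigmoid_sub (by linarith) le_rfl (by linarith)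
    _ ≤ 4 * Real.exp (2 * M) * |Real.sigmoid x - Real.sigmoid y| := by
      gcongr
      refine le_trans ?_ (le_abs_self _)
      gcongr

theorem sigmoid_inverse_lipschitz_asym_general (X Y x y : ℝ) (hY : 1 ≤ Y)
    (hx : x ∈ Set.Icc (-X) X) (hy : y ∈ Set.Icc (-Y) Y) :
    |x - y| ≤ 8 * (X + Y) * Real.exp (2 * Y) * |sigmoid x - sigmoid y| := by
  rw [sigmoid_eq_real_sigmoid]
  replace hx : |x| ≤ X := abs_le.mpr hx
  replace hy : |y| ≤ Y := abs_le.mpr hy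
  have hX : 0 ≤ X := (abs_nonneg x).trans hx
  rcases le_or_gt |x| (2 * Y) with hx_small | hx_large
  · calc |x - y| ≤ 4 * Real.exp (2 * Y) * |Real.sigmoid x - Real.sigmoid y| :=
          abs_sub_le_four_mul_exp_mul_abs_sigmoid_sub hx_small (by linarith)
      _ ≤ 8 * (X + Y) * Real.exp (2 * Y) * |Real.sigmoid x - Real.sigmoid y| := by
          gcongr
          linarith
  · have h_gap := le_four_mul_exp_two_mul_mul_abs_sigmoid_sub hy hx_large.le
    calc |x - y| ≤ X + Y := (abs_sub _ _).trans (add_le_add hx hy)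
      _ ≤ 2 * (X + Y) * Y := by nlinarith
      _ ≤ 2 * (X + Y) * (4 * Real.exp (2 * Y) * |Real.sigmoid x - Real.sigmoid y|) := by
          gcongr
      _ = 8 * (X + Y) * Real.exp (2 * Y) * |Real.sigmoid x - Real.sigmoid y| := by ring

/-- Inverse-Lipschitz-type inequality for the sigmoid with asymmetric bounds. -/
theorem sigmoid_inverse_lipschitz_asym (X Y x y : ℝ) (hX : 0 ≤ X) (hY : 1 ≤ Y)
    (hx : x ∈ Set.Icc (-X) X) (hy : y ∈ Set.Icc (-Y) Y) :
    |x - y| ≤ 8 * (X + Y) * Real.exp (2 * Y) * |sigmoid x - sigmoid y| :=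
  sigmoid_inverse_lipschitz_asym_general X Y x y hY hx hy
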